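/- arXiv:2006.11334 — 4 statements merged into one kernel-verified Lean document; each statement's English description precedes it below -/
import Mathlib

section
/- Let G be a simple graph on a countable vertex set. If G has a perfect matching, then G satisfies condition (A). -/
/-! Let `N` be a perfect matching. From the `M`-unmatched vertex `s`, leave even positions along
`N` and odd positions along `M`, stopping after the first odd position not covered by `M`.
Since `mate N` and `mate M` are involutions and `mate M` fixes `s`, a repeated vertex of this
walk can be folded back to two equal consecutive vertices: a fixed point of `mate N`, impossible
as `N` is perfect, or an `M`-unmatched vertex before the stop. So the walk is a path, and it
alternates because an `M`-edge at an even position would make it step straight back. -/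

namespace PaperMatchings

variable {V : Type*}

/-- The support of a set of edges: all vertices incident to some edge in `M`. -/
def supp (M : Set (Sym2 V)) : Set V := {v | ∃ e ∈ M, v ∈ e}

/-- `M` is a matching of `G`: a set of edges of `G` such that no vertex is
incident to more than one edge of `M`. -/
def IsMatching (G : SimpleGraph V) (M : Set (Sym2 V)) : Prop :=
  M ⊆ G.edgeSet ∧ ∀ (v : V), ∀ e ∈ M, ∀ e' ∈ M, v ∈ e → v ∈ e' → e = e'

/-- A perfect matching: a matching whose support is all of `V`. -/
def IsPerfectMatching (G : SimpleGraph V) (M : Set (Sym2 V)) : Prop :=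
  IsMatching G M ∧ supp M = Set.univ

/-- A (finite or infinite) path in `G`, given by its number of vertices `n : ℕ∞`
(`⊤` meaning infinite) and the enumeration `f` of its vertices: it is injective on
indices below `n` and consecutive vertices are adjacent. -/
def IsPath (G : SimpleGraph V) (n : ℕ∞) (f : ℕ → V) : Prop :=
  1 ≤ n ∧
  (∀ i j : ℕ, (i : ℕ∞) < n → (j : ℕ∞) < n → f i = f j → i = j) ∧
  (∀ i : ℕ, ((i : ℕ∞) + 1) < n → G.Adj (f i) (f (i + 1)))

/-- The consecutive edges of the path lie alternately in `M` and outside `M`. -/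
def IsAlternating (M : Set (Sym2 V)) (n : ℕ∞) (f : ℕ → V) : Prop :=
  ∀ i : ℕ, ((i : ℕ∞) + 2) < n →
    (s(f i, f (i + 1)) ∈ M ↔ s(f (i + 1), f (i + 2)) ∉ M)

/-- An `M`-augmenting path starting at `s`: an `M`-alternating path (with at least one
edge) starting at the unmatched vertex `s`, which is either infinite or ends at an
unmatched vertex. -/
def IsAugmentingPath (G : SimpleGraph V) (M : Set (Sym2 V)) (n : ℕ∞) (f : ℕ → V)
    (s : V) : Prop :=
  IsPath G n f ∧ IsAlternating M n f ∧ 1 < n ∧ f 0 = s ∧ s ∉ supp M ∧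
  ∀ k : ℕ, n = (k : ℕ∞) + 1 → f k ∉ supp M

/-- The path contains at least one edge of `M`. -/
def IsProper (M : Set (Sym2 V)) (n : ℕ∞) (f : ℕ → V) : Prop :=
  ∃ i : ℕ, ((i : ℕ∞) + 1) < n ∧ s(f i, f (i + 1)) ∈ M

/-- Condition (A): for every matching `M` and every vertex `s` not in the support
of `M` there is an `M`-augmenting path starting at `s`. -/
def ConditionA (G : SimpleGraph V) : Prop :=
  ∀ M : Set (Sym2 V), IsMatching G M → ∀ s : V, s ∉ supp M →
    ∃ (n : ℕ∞) (f : ℕ → V), IsAugmentingPath G M n f s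

/-- An independent matching: a matching admitting no proper augmenting path. -/
def IndepMatching (G : SimpleGraph V) (M : Set (Sym2 V)) : Prop :=
  IsMatching G M ∧
    ¬ ∃ (s : V) (n : ℕ∞) (f : ℕ → V), IsAugmentingPath G M n f s ∧ IsProper M n f

/-- The induced subgraph of `G` on the vertex set `S` (vertices outside `S`
become isolated). -/
def restrict (G : SimpleGraph V) (S : Set V) : SimpleGraph V where
  Adj u v := G.Adj u v ∧ u ∈ S ∧ v ∈ S
  symm := by
    constructor
    intro u v h
    exact ⟨h.1.symm, h.2.2, h.2.1⟩
  loopless := by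
    constructor
    intro v h
    exact G.irrefl h.1

/-- `W` is an independent subgraph of `G`: the induced subgraph `G[W]` has a perfect
matching (i.e. `G` has a matching with support exactly `W`) and every such matching
is an independent matching of `G`. -/
def IndepSubgraph (G : SimpleGraph V) (W : Set V) : Prop :=
  (∃ M, IsMatching G M ∧ supp M = W) ∧
  ∀ M, IsMatching G M → supp M = W → IndepMatching G M

/-- The induced subgraph `G[W]` satisfies condition (A): for every matching of
`G[W]` and every vertex of `W` not in its support, there is an augmenting path
inside `G[W]`. -/
def ConditionAOn (G : SimpleGraph V) (W : Set V) : Prop :=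
  ∀ M : Set (Sym2 V), IsMatching (restrict G W) M → ∀ s ∈ W, s ∉ supp M →
    ∃ (n : ℕ∞) (f : ℕ → V), IsAugmentingPath (restrict G W) M n f s

lemma mem_supp_iff {M : Set (Sym2 V)} {v : V} : v ∈ supp M ↔ ∃ w, s(v, w) ∈ M := by
  constructor
  · rintro ⟨e, he, hv⟩
    exact ⟨Sym2.Mem.other hv, by rwa [Sym2.other_spec hv]⟩
  · rintro ⟨w, hw⟩
    exact ⟨_, hw, Sym2.mem_mk_left v w⟩

section Zigzag

variable (σ τ : V → V)

def zigzag (s : V) : ℕ → V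
  | 0 => s
  | k + 1 => (if Even k then σ else τ) (zigzag s k)

variable {σ τ} {s : V}

@[simp]
lemma zigzag_zero : zigzag σ τ s 0 = s := rfl

lemma zigzag_succ (k : ℕ) :
    zigzag σ τ s (k + 1) = (if Even k then σ else τ) (zigzag σ τ s k) := rfl

lemma ite_even_add_two_mul (k m : ℕ) :
    (if Even (k + 2 * m) then σ else τ) = (if Even k then σ else τ) := by
  simp [Nat.even_add]

variable (hσ : Function.Involutive σ) (hτ : Function.Involutive τ)
include hσ hτ

lemma zigzag_pred (k : ℕ) :
    (if Even k then σ else τ) (zigzag σ τ s (k + 1)) = zigzag σ τ s k := by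
  rw [zigzag_succ]
  split_ifs
  exacts [hσ _, hτ _]

lemma zigzag_fold {a : ℕ} (b : ℕ) (h : zigzag σ τ s a = zigzag σ τ s (a + 2 * b + 1)) :
    zigzag σ τ s (a + b) = zigzag σ τ s (a + b + 1) := by
  induction b generalizing a with
  | zero => simpa using h
  | succ b ih =>
    have h' : zigzag σ τ s (a + 1) = zigzag σ τ s (a + 1 + 2 * b + 1) := by
      rw [show a + 1 + 2 * b + 1 = a + 2 * (b + 1) by ring, zigzag_succ, h,
        ← zigzag_pred hσ hτ (a + 2 * (b + 1)), ite_even_add_two_mul]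
    simpa only [add_right_comm _ 1 b, add_assoc] using ih h'

lemma zigzag_descend {a : ℕ} (c : ℕ) (h : zigzag σ τ s a = zigzag σ τ s (a + 2 * c)) :
    s = zigzag σ τ s (2 * c) := by
  induction a with
  | zero => simpa using h
  | succ a ih =>
    apply ih
    rw [← zigzag_pred hσ hτ a, h, ← ite_even_add_two_mul a c, add_right_comm,
      zigzag_pred hσ hτ]

lemma exists_zigzag_eq_succ (hs : τ s = s) {i j : ℕ} (hij : i < j)
    (h : zigzag σ τ s i = zigzag σ τ s j) :
    ∃ k < j, zigzag σ τ s k = zigzag σ τ s (k + 1) := by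
  obtain ⟨d, rfl⟩ := Nat.exists_eq_add_of_lt hij
  rcases Nat.even_or_odd' d with ⟨b, rfl | rfl⟩
  · exact ⟨i + b, by omega, zigzag_fold hσ hτ b h⟩
  · have h0 : s = zigzag σ τ s (2 * b + 1 + 1) :=
      zigzag_descend hσ hτ (b + 1) (h.trans (by ring_nf))
    have hpred := zigzag_pred hσ hτ (s := s) (2 * b + 1)
    rw [if_neg (Nat.not_even_two_mul_add_one b), ← h0, hs] at hpred
    exact ⟨2 * b + 1, by omega, hpred.symm.trans h0⟩

end Zigzag

section Mate

variable {M : Set (Sym2 V)} {v w : V}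

open Classical in
/-- The partner of `v` in `M`; extending it by the identity off `supp M` makes it an
involution of `V` whenever `M` is a matching. -/
noncomputable def mate (M : Set (Sym2 V)) (v : V) : V :=
  if h : ∃ w, s(v, w) ∈ M then h.choose else v

lemma mk_mate_mem (h : v ∈ supp M) : s(v, mate M v) ∈ M := by
  rw [mate, dif_pos (mem_supp_iff.mp h)]
  exact (mem_supp_iff.mp h).choose_spec

lemma mate_of_not_mem (h : v ∉ supp M) : mate M v = v :=
  dif_neg (mt mem_supp_iff.mpr h)

namespace IsMatching

variable {G : SimpleGraph V} (hM : IsMatching G M)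
include hM

lemma eq_of_mk_mem {a b c : V} (hb : s(a, b) ∈ M) (hc : s(a, c) ∈ M) : b = c := by
  rcases Sym2.eq_iff.mp (hM.2 a _ hb _ hc (Sym2.mem_mk_left a b) (Sym2.mem_mk_left a c)) with
    ⟨-, h⟩ | ⟨h₁, h₂⟩
  exacts [h, h₂.trans h₁]

lemma mate_eq (h : s(v, w) ∈ M) : mate M v = w :=
  hM.eq_of_mk_mem (mk_mate_mem (mem_supp_iff.mpr ⟨w, h⟩)) h

lemma mate_involutive : Function.Involutive (mate M) := by
  intro v
  by_cases hv : v ∈ supp M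
  · exact hM.mate_eq (Sym2.eq_swap ▸ mk_mate_mem hv)
  · rw [mate_of_not_mem hv, mate_of_not_mem hv]

lemma mate_eq_self_iff : mate M v = v ↔ v ∉ supp M := by
  refine ⟨fun h hv => ?_, mate_of_not_mem⟩
  have hadj : G.Adj v (mate M v) := hM.1 (mk_mate_mem hv)
  exact hadj.ne h.symm

end IsMatching

lemma IsPerfectMatching.mate_ne {G : SimpleGraph V} (hM : IsPerfectMatching G M) (v : V) :
    mate M v ≠ v := by
  simp [hM.1.mate_eq_self_iff, hM.2]

end Mate

section LengthUntil

variable {P : ℕ → Prop} {k : ℕ}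

/-- This is `⊤` when no index satisfies `P`, as `sInf ∅ = ⊤`. -/
noncomputable def lengthUntil (P : ℕ → Prop) : ℕ∞ :=
  sInf ((fun k : ℕ => (k : ℕ∞) + 1) '' {k | P k})

lemma lengthUntil_le (hk : P k) : lengthUntil P ≤ k + 1 :=
  sInf_le ⟨k, hk, rfl⟩

lemma le_lengthUntil {m : ℕ∞} (h : ∀ k, P k → m ≤ k + 1) : m ≤ lengthUntil P :=
  le_sInf (by rintro _ ⟨k, hk, rfl⟩; exact h k hk)

lemma of_lengthUntil_eq (h : lengthUntil P = k + 1) : P k := by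
  have hne : ((fun k : ℕ => (k : ℕ∞) + 1) '' {k | P k}).Nonempty := by
    rw [Set.nonempty_iff_ne_empty]
    rintro hempty
    rw [lengthUntil, hempty, sInf_empty] at h
    exact ENat.top_ne_natCast (k + 1) (by exact_mod_cast h)
  obtain ⟨m, hm, hmk⟩ := csInf_mem hne
  rw [← lengthUntil, h] at hmk
  obtain rfl : m = k := by simpa using hmk
  exact hm

end LengthUntil

section AlternatingPath

variable {G : SimpleGraph V} {N M : Set (Sym2 V)} {s : V} {i j k : ℕ}

noncomputable def altPath (N M : Set (Sym2 V)) (s : V) : ℕ → V :=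
  zigzag (mate N) (mate M) s

noncomputable def altLength (N M : Set (Sym2 V)) (s : V) : ℕ∞ :=
  lengthUntil fun k => Odd k ∧ altPath N M s k ∉ supp M

lemma altPath_succ_of_even (hk : Even k) : altPath N M s (k + 1) = mate N (altPath N M s k) := by
  rw [altPath, zigzag_succ, if_pos hk]

lemma altPath_succ_of_odd (hk : Odd k) : altPath N M s (k + 1) = mate M (altPath N M s k) := by
  rw [altPath, zigzag_succ, if_neg (Nat.not_even_iff_odd.mpr hk)]

lemma two_le_altLength : 2 ≤ altLength N M s := by
  refine le_lengthUntil fun k ⟨⟨r, hr⟩, _⟩ => ?_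
  exact_mod_cast (show 2 ≤ k + 1 by omega)

lemma altPath_mem_supp (hk : Odd k) (hlt : (k : ℕ∞) + 1 < altLength N M s) :
    altPath N M s k ∈ supp M := by
  by_contra h
  exact (lengthUntil_le ⟨hk, h⟩).not_gt hlt

lemma mk_altPath_mem_left (hN : IsPerfectMatching G N) (hk : Even k) :
    s(altPath N M s k, altPath N M s (k + 1)) ∈ N := by
  rw [altPath_succ_of_even hk]
  exact mk_mate_mem (hN.2 ▸ Set.mem_univ _)

lemma mk_altPath_mem_right (hk : Odd k) (hlt : (k : ℕ∞) + 1 < altLength N M s) :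
    s(altPath N M s k, altPath N M s (k + 1)) ∈ M := by
  rw [altPath_succ_of_odd hk]
  exact mk_mate_mem (altPath_mem_supp hk hlt)

variable (hN : IsPerfectMatching G N) (hM : IsMatching G M) (hs : s ∉ supp M)
include hN hM hs

lemma altPath_ne (hij : i < j) (hj : (j : ℕ∞) < altLength N M s) :
    altPath N M s i ≠ altPath N M s j := by
  intro h
  obtain ⟨k, hkj, hk⟩ := exists_zigzag_eq_succ hN.1.mate_involutive hM.mate_involutive
    (mate_of_not_mem hs) hij h
  rw [zigzag_succ] at hk
  split_ifs at hk with heven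
  · exact hN.mate_ne _ hk.symm
  · refine hM.mate_eq_self_iff.mp hk.symm (altPath_mem_supp (Nat.not_even_iff_odd.mp heven) ?_)
    exact lt_of_le_of_lt (by exact_mod_cast hkj) hj

lemma altPath_injOn (hi : (i : ℕ∞) < altLength N M s) (hj : (j : ℕ∞) < altLength N M s)
    (h : altPath N M s i = altPath N M s j) : i = j := by
  rcases lt_trichotomy i j with hij | rfl | hji
  · exact absurd h (altPath_ne hN hM hs hij hj)
  · rfl
  · exact absurd h.symm (altPath_ne hN hM hs hji hi)

lemma isPath_altPath : IsPath G (altLength N M s) (altPath N M s) := by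
  refine ⟨le_trans (by norm_num) two_le_altLength, fun i j => altPath_injOn hN hM hs,
    fun i hi => ?_⟩
  rcases Nat.even_or_odd i with heven | hodd
  · exact hN.1.1 (mk_altPath_mem_left hN heven)
  · exact hM.1 (mk_altPath_mem_right hodd hi)

lemma isAlternating_altPath : IsAlternating M (altLength N M s) (altPath N M s) := by
  intro i hi
  have hi2 : ((i + 2 : ℕ) : ℕ∞) < altLength N M s := by exact_mod_cast hi
  have hi1 : ((i + 1 : ℕ) : ℕ∞) + 1 < altLength N M s := by exact_mod_cast hi
  have hback : altPath N M s i ≠ altPath N M s (i + 2) := altPath_ne hN hM hs (by omega) hi2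
  rcases Nat.even_or_odd i with heven | hodd
  · refine iff_of_false (fun hmem => hback ?_)
      (not_not_intro (mk_altPath_mem_right heven.add_one hi1))
    rw [altPath_succ_of_odd heven.add_one, hM.mate_eq (Sym2.eq_swap ▸ hmem)]
  · refine iff_of_true (mk_altPath_mem_right hodd (lt_of_le_of_lt (by norm_num) hi1))
      fun hmem => hback ?_
    rw [← hM.mate_eq hmem, altPath_succ_of_odd hodd, hM.mate_involutive]

lemma isAugmentingPath_altPath : IsAugmentingPath G M (altLength N M s) (altPath N M s) s :=
  ⟨isPath_altPath hN hM hs, isAlternating_altPath hN hM hs,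
    lt_of_lt_of_le (by norm_num) two_le_altLength, rfl, hs,
    fun _ hk => (of_lengthUntil_eq hk).2⟩

end AlternatingPath

theorem conditionA_of_perfect_matching_general {V : Type*} (G : SimpleGraph V)
    (h : ∃ M : Set (Sym2 V), IsPerfectMatching G M) : ConditionA G := by
  obtain ⟨N, hN⟩ := h
  intro M hM s hs
  exact ⟨_, _, isAugmentingPath_altPath hN hM hs⟩

/-- If a simple graph on a countable vertex set has a perfect matching,
then it satisfies condition (A). -/
theorem conditionA_of_perfect_matching {V : Type*} [Countable V] (G : SimpleGraph V)
    (h : ∃ M : Set (Sym2 V), IsPerfectMatching G M) : ConditionA G :=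
  conditionA_of_perfect_matching_general G h

end PaperMatchings
end

section
/- Let G be a simple graph on a countable vertex set that satisfies condition (A), and let M be an independent matching of G. Then the induced subgraph of G on V \ V(M) satisfies condition (A). -/
/-!
Given a matching `N` of `G[V ∖ V(M)]` and an `N`-unmatched vertex `s`, the union `M ∪ N` is a
matching of `G`, so condition (A) yields an `(M ∪ N)`-augmenting path `P` from `s`. If `P` met
`V(M)`, then from the vertex just before its first visit to `V(M)` it would alternate between
non-edges and edges of `M ∪ N`, its first matched edge lying in `M`; cutting it at the first
matched edge that lies in `N` (whose first vertex is `M`-unmatched), or not at all, gives a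
proper `M`-augmenting path, contradicting the independence of `M`. So `P` stays inside
`V ∖ V(M)`, where it is `N`-augmenting.
-/

namespace PaperMatchings

variable {V : Type*}

section Augmenting

variable {G : SimpleGraph V} {M N : Set (Sym2 V)} {n : ℕ∞} {f : ℕ → V} {s : V}

lemma mem_supp {e : Sym2 V} {v : V} (he : e ∈ M) (hv : v ∈ e) : v ∈ supp M := ⟨e, he, hv⟩

lemma supp_union : supp (M ∪ N) = supp M ∪ supp N := by
  ext v
  simp only [supp, Set.mem_union, Set.mem_ofPred_eq, or_and_right, exists_or]

lemma IsMatching.union (hM : IsMatching G M) (hN : IsMatching G N)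
    (hMN : Disjoint (supp M) (supp N)) : IsMatching G (M ∪ N) := by
  refine ⟨Set.union_subset hM.1 hN.1, ?_⟩
  rintro v e (he | he) e' (he' | he') hv hv'
  · exact hM.2 v e he e' he' hv hv'
  · exact (Set.disjoint_left.1 hMN (mem_supp he hv) (mem_supp he' hv')).elim
  · exact (Set.disjoint_left.1 hMN (mem_supp he' hv') (mem_supp he hv)).elim
  · exact hN.2 v e he e' he' hv hv'

lemma supp_subset_of_isMatching_restrict {W : Set V} (hN : IsMatching (restrict G W) N) :
    supp N ⊆ W := by
  rintro v ⟨e, he, hv⟩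
  induction e using Sym2.ind with
  | _ a b =>
    obtain ⟨-, ha, hb⟩ : (restrict G W).Adj a b := hN.1 he
    rcases Sym2.mem_iff.1 hv with rfl | rfl
    exacts [ha, hb]

lemma IsMatching.of_restrict {W : Set V} (hN : IsMatching (restrict G W) N) :
    IsMatching G N := by
  refine ⟨fun e he => ?_, hN.2⟩
  induction e using Sym2.ind with
  | _ a b => exact (hN.1 he).1

lemma IsPath.of_le {L : ℕ∞} (hf : IsPath G n f) (hL : 1 ≤ L) (hLn : L ≤ n) : IsPath G L f :=
  ⟨hL, fun i j hi hj => hf.2.1 i j (hi.trans_le hLn) (hj.trans_le hLn),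
    fun i hi => hf.2.2 i (hi.trans_le hLn)⟩

lemma IsPath.shift {b : ℕ} {L : ℕ∞} (hf : IsPath G (b + L) f) (hL : 1 ≤ L) :
    IsPath G L (fun t => f (b + t)) := by
  have hb : (b : ℕ∞) ≠ ⊤ := ENat.natCast_ne_top b
  refine ⟨hL, fun i j hi hj hij => ?_, fun i hi => ?_⟩
  · have := hf.2.1 (b + i) (b + j) (by push_cast; exact (ENat.add_lt_add_iff_left hb).2 hi)
      (by push_cast; exact (ENat.add_lt_add_iff_left hb).2 hj) hij
    omega
  · exact hf.2.2 (b + i) (by push_cast; rw [add_assoc]; exact (ENat.add_lt_add_iff_left hb).2 hi)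

lemma IsAugmentingPath.mem_iff_odd (hP : IsAugmentingPath G M n f s) {i : ℕ}
    (hi : (i : ℕ∞) + 1 < n) : s(f i, f (i + 1)) ∈ M ↔ Odd i := by
  induction i with
  | zero =>
    refine iff_of_false (fun h0 => ?_) Nat.not_odd_zero
    exact hP.2.2.2.2.1 (hP.2.2.2.1 ▸ mem_supp h0 (Sym2.mem_mk_left _ _))
  | succ i ih =>
    have hi2 : (i : ℕ∞) + 2 < n := by push_cast at hi; rwa [add_assoc, one_add_one_eq_two] at hi
    rw [Nat.odd_add_one, ← ih (lt_of_le_of_lt (by gcongr; norm_num) hi2)]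
    have := hP.2.1 i hi2
    tauto

lemma isAugmentingPath_of_mem_iff_odd (hf : IsPath G n f) (hn : 1 < n) (h0 : f 0 ∉ supp M)
    (hend : ∀ k : ℕ, n = k + 1 → f k ∉ supp M)
    (hodd : ∀ i : ℕ, (i : ℕ∞) + 1 < n → (s(f i, f (i + 1)) ∈ M ↔ Odd i)) :
    IsAugmentingPath G M n f (f 0) := by
  refine ⟨hf, fun i hi => ?_, hn, rfl, h0, hend⟩
  have hi1 : (i : ℕ∞) + 1 < n := lt_of_le_of_lt (by gcongr; norm_num) hi
  have hi2 : ((i + 1 : ℕ) : ℕ∞) + 1 < n := by push_cast; rwa [add_assoc, one_add_one_eq_two]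
  rw [hodd i hi1, hodd (i + 1) hi2, Nat.odd_add_one, not_not]

lemma exists_proper_of_union_alternating (hMN : Disjoint (supp M) (supp N))
    (hf : IsPath G n f) (h0 : f 0 ∉ supp M) (hend : ∀ k : ℕ, n = k + 1 → f k ∉ supp M)
    (hodd : ∀ i : ℕ, (i : ℕ∞) + 1 < n → (s(f i, f (i + 1)) ∈ M ∪ N ↔ Odd i))
    (h1 : (1 : ℕ∞) + 1 < n) (h1M : s(f 1, f 2) ∈ M) :
    ∃ (s : V) (n : ℕ∞) (f : ℕ → V), IsAugmentingPath G M n f s ∧ IsProper M n f := by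
  suffices key : ∀ L : ℕ∞, (1 : ℕ∞) + 1 < L → L ≤ n → (∀ k : ℕ, L = k + 1 → f k ∉ supp M) →
      (∀ i : ℕ, (i : ℕ∞) + 1 < L → Odd i → s(f i, f (i + 1)) ∉ N) →
      ∃ (s : V) (n : ℕ∞) (f : ℕ → V), IsAugmentingPath G M n f s ∧ IsProper M n f by
    classical
    by_cases hN : ∃ i : ℕ, ((i : ℕ∞) + 1 < n ∧ Odd i) ∧ s(f i, f (i + 1)) ∈ N
    · -- cut the path at the first vertex of an `N`-edge in odd position: it is `M`-unmatched
      obtain ⟨⟨hin, hiodd⟩, hiN⟩ := Nat.find_spec hN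
      have hi1 : Nat.find hN ≠ 1 := fun h =>
        Set.disjoint_left.1 hMN (mem_supp h1M (Sym2.mem_mk_left _ _))
          (mem_supp (h ▸ hiN) (Sym2.mem_mk_left _ _))
      refine key _ ?_ hin.le ?_ fun i hi hiodd' hiN' => Nat.find_min hN ?_ ⟨⟨?_, hiodd'⟩, hiN'⟩
      · have : 3 ≤ Nat.find hN := by obtain ⟨m, hm⟩ := hiodd; omega
        exact_mod_cast (by omega : 1 + 1 < Nat.find hN + 1)
      · rintro k hk
        obtain rfl : Nat.find hN = k := Nat.add_right_cancel (by exact_mod_cast hk)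
        exact Set.disjoint_right.1 hMN (mem_supp hiN (Sym2.mem_mk_left _ _))
      · exact Nat.lt_of_add_lt_add_right (by exact_mod_cast hi : i + 1 < Nat.find hN + 1)
      · exact hi.trans hin
    · push Not at hN
      exact key n h1 le_rfl hend fun i hi hiodd => hN i ⟨hi, hiodd⟩
  intro L hL hLn hLend hLN
  have hLodd : ∀ i : ℕ, (i : ℕ∞) + 1 < L → (s(f i, f (i + 1)) ∈ M ↔ Odd i) := fun i hi =>
    ⟨fun h => (hodd i (hi.trans_le hLn)).1 (Or.inl h),
      fun h => ((hodd i (hi.trans_le hLn)).2 h).resolve_right (hLN i hi h)⟩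
  have hL1 : (1 : ℕ∞) < L := lt_of_le_of_lt le_add_self hL
  exact ⟨_, L, f, isAugmentingPath_of_mem_iff_odd (hf.of_le hL1.le hLn) hL1 h0 hLend hLodd,
    1, hL, (hLodd 1 hL).2 odd_one⟩

lemma exists_proper_of_mem_supp (hMN : Disjoint (supp M) (supp N))
    (hP : IsAugmentingPath G (M ∪ N) n f s) (k : ℕ) (hk : (k : ℕ∞) < n) (hkM : f k ∈ supp M) :
    ∃ (s : V) (n : ℕ∞) (f : ℕ → V), IsAugmentingPath G M n f s ∧ IsProper M n f := by
  induction k using Nat.strong_induction_on with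
  | _ k ih =>
  by_cases hprev : ∃ j < k, f j ∈ supp M
  · obtain ⟨j, hjk, hjM⟩ := hprev
    exact ih j hjk (lt_trans (Nat.cast_lt.2 hjk) hk) hjM
  push Not at hprev
  have hMN' : ∀ {v}, v ∈ supp M → v ∉ supp N := fun hv => Set.disjoint_left.1 hMN hv
  have hunion : ∀ {v}, v ∈ supp M → v ∈ supp (M ∪ N) := fun hv => supp_union ▸ Or.inl hv
  obtain ⟨b, rfl⟩ : ∃ b, k = b + 1 := Nat.exists_eq_add_one_of_ne_zero fun h =>
    hP.2.2.2.2.1 (hP.2.2.2.1 ▸ hunion (h ▸ hkM))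
  -- `f (b + 1)` is the first vertex of the path in `supp M`; from `f b` on, the path
  -- alternates between non-edges and edges of `M ∪ N`, starting with a non-edge
  have hbM : f b ∉ supp M := hprev b (Nat.lt_succ_self b)
  have hbn : (b : ℕ∞) + 1 < n := by exact_mod_cast hk
  have hb : ¬ Odd b := fun hb => ((hP.mem_iff_odd hbn).2 hb).elim
    (fun h => hbM (mem_supp h (Sym2.mem_mk_left _ _)))
    (fun h => hMN' hkM (mem_supp h (Sym2.mem_mk_right _ _)))
  have hkn : ((b + 1 : ℕ) : ℕ∞) + 1 < n :=
    lt_of_le_of_ne (Order.add_one_le_of_lt hk) fun h => hP.2.2.2.2.2 _ h.symm (hunion hkM)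
  obtain ⟨L, rfl⟩ : ∃ L, n = b + L :=
    le_iff_exists_add.1 (lt_of_le_of_lt le_self_add hbn).le
  have hshift : ∀ {i : ℕ} {m : ℕ∞}, (i : ℕ∞) + m < L ↔ ((b + i : ℕ) : ℕ∞) + m < b + L := by
    intro i m
    push_cast
    rw [add_assoc]
    exact (ENat.add_lt_add_iff_left (ENat.natCast_ne_top b)).symm
  have h1 : (1 : ℕ∞) + 1 < L := hshift.2 (by push_cast at hkn ⊢; rwa [add_assoc] at hkn)
  refine exists_proper_of_union_alternating hMN (hP.1.shift (lt_of_le_of_lt le_add_self h1).le)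
    hbM (fun j hj => ?_) (fun i hi => ?_) h1 ?_
  · exact fun hjM => hP.2.2.2.2.2 (b + j) (by rw [hj]; push_cast; ring) (hunion hjM)
  · rw [← add_assoc, hP.mem_iff_odd (hshift.1 hi), Nat.odd_iff, Nat.odd_iff]
    rw [Nat.odd_iff] at hb
    omega
  · have h2 := hP.mem_iff_odd hkn
    rw [show b + 1 + 1 = b + 2 from rfl] at h2
    exact (h2.2 (by simpa [Nat.odd_add_one] using hb)).resolve_right
      fun h => hMN' hkM (mem_supp h (Sym2.mem_mk_left _ _))

lemma IsAugmentingPath.restrict_compl_supp (hP : IsAugmentingPath G (M ∪ N) n f s)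
    (hfree : ∀ i : ℕ, (i : ℕ∞) < n → f i ∉ supp M) :
    IsAugmentingPath (restrict G (supp M)ᶜ) N n f s := by
  obtain ⟨⟨hn1, hinj, hadj⟩, halt, hn, hf0, hs, hend⟩ := hP
  have hlt : ∀ {i : ℕ}, (i : ℕ∞) + 1 < n → (i : ℕ∞) < n := lt_of_le_of_lt le_self_add
  have hedge : ∀ {i : ℕ}, (i : ℕ∞) + 1 < n →
      (s(f i, f (i + 1)) ∈ M ∪ N ↔ s(f i, f (i + 1)) ∈ N) :=
    fun hi => or_iff_right fun h => hfree _ (hlt hi) (mem_supp h (Sym2.mem_mk_left _ _))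
  have hsupp : supp N ⊆ supp (M ∪ N) := fun v hv => supp_union ▸ Or.inr hv
  refine ⟨⟨hn1, hinj, fun i hi =>
      ⟨hadj i hi, hfree i (hlt hi), hfree (i + 1) (by exact_mod_cast hi)⟩⟩,
    fun i hi => ?_, hn, hf0, fun h => hs (hsupp h), fun k hk h => hend k hk (hsupp h)⟩
  have hi1 : (i : ℕ∞) + 1 < n := lt_of_le_of_lt (by gcongr; norm_num) hi
  have hi2 : ((i + 1 : ℕ) : ℕ∞) + 1 < n := by push_cast; rwa [add_assoc, one_add_one_eq_two]
  rw [← hedge hi1, ← hedge hi2]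
  exact halt i hi

end Augmenting

theorem conditionA_of_remove_indep_matching_general {V : Type*}
    (G : SimpleGraph V) (hA : ConditionA G) (M : Set (Sym2 V))
    (hM : IndepMatching G M) :
    ConditionAOn G (supp M)ᶜ := by
  intro N hN s hsW hsN
  have hMN : Disjoint (supp M) (supp N) :=
    (Set.subset_compl_iff_disjoint_right.1 (supp_subset_of_isMatching_restrict hN)).symm
  have hs : s ∉ supp (M ∪ N) := by
    rw [supp_union]
    exact not_or.2 ⟨hsW, hsN⟩
  obtain ⟨n, f, hP⟩ := hA _ (hM.1.union hN.of_restrict hMN) s hs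
  have hfree : ∀ i : ℕ, (i : ℕ∞) < n → f i ∉ supp M := fun i hi hiM =>
    hM.2 (exists_proper_of_mem_supp hMN hP i hi hiM)
  exact ⟨n, f, hP.restrict_compl_supp hfree⟩

/-- Removing the support of an independent matching from a graph
satisfying condition (A) leaves an induced subgraph satisfying condition (A). -/
theorem conditionA_of_remove_indep_matching {V : Type*} [Countable V]
    (G : SimpleGraph V) (hA : ConditionA G) (M : Set (Sym2 V))
    (hM : IndepMatching G M) :
    ConditionAOn G (supp M)ᶜ :=
  conditionA_of_remove_indep_matching_general G hA M hM

end PaperMatchings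
end

section
/- Let G be a simple graph on a countable vertex set, let M be a perfect matching of G, and let W be an independent subgraph of G. Then there is no edge {s, v} ∈ M with s ∈ V \ W and v ∈ W. -/
/-!
Suppose `s ∉ W` is matched by `M` to `v ∈ W`, and let `N` be a perfect matching of `G[W]`.
Starting at `s`, walk alternately along `M`-edges and `N`-edges, stopping at the first
vertex outside `W`. Since `M` and `N` are matchings and `s` is not covered by `N`, the walk
never revisits a vertex; so it is a finite or infinite `N`-augmenting path, and it contains
the `N`-edge at `v`. This contradicts the independence of `N`.
-/

namespace PaperMatchings

variable {V : Type*}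

open Classical in
noncomputable def partner (M : Set (Sym2 V)) (v : V) : V :=
  if h : ∃ w, s(v, w) ∈ M then h.choose else v

lemma mk_partner_mem {M : Set (Sym2 V)} {v : V} (h : v ∈ supp M) : s(v, partner M v) ∈ M := by
  have h' := mem_supp_iff.mp h
  rw [partner, dif_pos h']
  exact h'.choose_spec

namespace IsMatching

variable {G : SimpleGraph V} {M : Set (Sym2 V)} {u w w' : V}

lemma eq_of_mem_of_mem (hM : IsMatching G M) (h : s(u, w) ∈ M) (h' : s(u, w') ∈ M) :
    w = w' :=
  Sym2.congr_right.mp (hM.2 u _ h _ h' (Sym2.mem_mk_left _ _) (Sym2.mem_mk_left _ _))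

lemma ne_of_mem (hM : IsMatching G M) (h : s(u, w) ∈ M) : u ≠ w :=
  (hM.1 h).ne

end IsMatching

def alternate (M N : Set (Sym2 V)) (i : ℕ) : Set (Sym2 V) := if Even i then M else N

section Alternate

variable {G : SimpleGraph V} {M N : Set (Sym2 V)}

lemma alternate_of_even {i : ℕ} (hi : Even i) : alternate M N i = M := if_pos hi

lemma alternate_of_odd {i : ℕ} (hi : Odd i) : alternate M N i = N :=
  if_neg (Nat.not_even_iff_odd.mpr hi)

lemma alternate_eq_of_even_iff {i j : ℕ} (h : Even i ↔ Even j) :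
    alternate M N i = alternate M N j := by
  simp only [alternate, h]

lemma alternate_eq_or (i : ℕ) : alternate M N i = M ∨ alternate M N i = N := by
  unfold alternate; split <;> simp

lemma isMatching_alternate (hM : IsMatching G M) (hN : IsMatching G N) (i : ℕ) :
    IsMatching G (alternate M N i) := by
  rcases alternate_eq_or (M := M) (N := N) i with h | h <;> rw [h] <;> assumption

variable {f : ℕ → V}

/-- Tracing a repetition `f a = f b` back along the matching edges either reaches
`f 0 ∈ supp N` or forces a loop `f c = f (c + 1)`. -/
lemma ne_of_alternate (hM : IsMatching G M) (hN : IsMatching G N) (h0 : f 0 ∉ supp N)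
    {b : ℕ} (hf : ∀ i < b, s(f i, f (i + 1)) ∈ alternate M N i) {a : ℕ} (hab : a < b) :
    f a ≠ f b := by
  induction b using Nat.strong_induction_on generalizing a with
  | _ b ih =>
  obtain ⟨c, rfl⟩ : ∃ c, b = c + 1 := ⟨b - 1, by omega⟩
  have hX := isMatching_alternate hM hN
  have hc := hf c (by omega)
  have ih' := fun {a} (hac : a < c) => ih c (by omega) (fun i hi => hf i (by omega)) hac
  intro heq
  by_cases hpar : Even a ↔ Even c
  · rcases lt_trichotomy (a + 1) c with hlt | rfl | hgt
    · rw [← alternate_eq_of_even_iff hpar, Sym2.eq_swap, ← heq] at hc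
      exact ih' hlt ((hX a).eq_of_mem_of_mem (hf a (by omega)) hc)
    · simp only [Nat.even_add_one] at hpar; tauto
    · obtain rfl : a = c := by omega
      exact (hX a).ne_of_mem hc heq
  · cases a with
    | zero =>
      have hcN : alternate M N c = N := alternate_of_odd (by simpa using hpar)
      rw [hcN, Sym2.eq_swap, ← heq] at hc
      exact h0 (mem_supp_iff.mpr ⟨_, hc⟩)
    | succ a =>
      have hpar' : Even a ↔ Even c := by simp only [Nat.even_add_one] at hpar; tauto
      have ha := hf a (by omega)
      rw [alternate_eq_of_even_iff hpar', Sym2.eq_swap, heq] at ha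
      rw [Sym2.eq_swap] at hc
      exact ih' (by omega) ((hX c).eq_of_mem_of_mem ha hc)

variable {n : ℕ∞}

lemma natCast_add_one_lt {i j : ℕ} (hij : i < j) (hj : (j : ℕ∞) < n) : (i : ℕ∞) + 1 < n :=
  lt_of_le_of_lt (by exact_mod_cast hij) hj

lemma eq_of_alternate (hM : IsMatching G M) (hN : IsMatching G N) (h0 : f 0 ∉ supp N)
    (hf : ∀ i : ℕ, (i : ℕ∞) + 1 < n → s(f i, f (i + 1)) ∈ alternate M N i)
    {i j : ℕ} (hi : (i : ℕ∞) < n) (hj : (j : ℕ∞) < n) (h : f i = f j) : i = j := by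
  have key {a b : ℕ} (hab : a < b) (hb : (b : ℕ∞) < n) : f a ≠ f b :=
    ne_of_alternate hM hN h0 (fun k hk => hf k (natCast_add_one_lt hk hb)) hab
  rcases lt_trichotomy i j with hij | rfl | hij
  · exact absurd h (key hij hj)
  · rfl
  · exact absurd h.symm (key hij hi)

lemma mem_right_iff_odd (hM : IsMatching G M) (hN : IsMatching G N) (h0 : f 0 ∉ supp N)
    (hf : ∀ i : ℕ, (i : ℕ∞) + 1 < n → s(f i, f (i + 1)) ∈ alternate M N i)
    {i : ℕ} (hi : (i : ℕ∞) + 1 < n) : s(f i, f (i + 1)) ∈ N ↔ Odd i := by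
  by_cases hodd : Odd i
  · simpa [alternate_of_odd hodd, hodd] using hf i hi
  simp only [hodd, iff_false]
  intro hiN
  cases i with
  | zero => exact h0 (mem_supp_iff.mpr ⟨_, hiN⟩)
  | succ j =>
    have hj : Odd j := by simpa [Nat.odd_add_one] using hodd
    have hjN := hf j (lt_trans (by exact_mod_cast Nat.lt_succ_self _) hi)
    rw [alternate_of_odd hj, Sym2.eq_swap] at hjN
    have := eq_of_alternate hM hN h0 hf (lt_trans (by exact_mod_cast (by omega : j < j + 2)) hi)
      (by exact_mod_cast hi) (hN.eq_of_mem_of_mem hjN hiN)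
    omega

theorem isAugmentingPath_of_alternate (hM : IsMatching G M) (hN : IsMatching G N)
    (hn : 1 < n) (h0 : f 0 ∉ supp N)
    (hf : ∀ i : ℕ, (i : ℕ∞) + 1 < n → s(f i, f (i + 1)) ∈ alternate M N i)
    (hend : ∀ k : ℕ, n = k + 1 → f k ∉ supp N) :
    IsAugmentingPath G N n f (f 0) := by
  refine ⟨⟨hn.le, fun i j hi hj => eq_of_alternate hM hN h0 hf hi hj, fun i hi => ?_⟩,
    fun i hi => ?_, hn, rfl, h0, hend⟩
  · exact (isMatching_alternate hM hN i).1 (hf i hi)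
  · have hi' : ((i + 1 : ℕ) : ℕ∞) + 1 < n := by exact_mod_cast hi
    rw [mem_right_iff_odd hM hN h0 hf (lt_trans (by exact_mod_cast Nat.lt_succ_self _) hi'),
      mem_right_iff_odd hM hN h0 hf hi', Nat.odd_add_one, not_not]

end Alternate

noncomputable def alternatingWalk (M N : Set (Sym2 V)) (s : V) : ℕ → V
  | 0 => s
  | i + 1 => partner (alternate M N i) (alternatingWalk M N s i)

lemma exists_enat_forall_lt_and_not (p : ℕ → Prop) :
    ∃ n : ℕ∞, (∀ i : ℕ, (i : ℕ∞) < n → p i) ∧ ∀ k : ℕ, n = k → ¬ p k := by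
  classical
  by_cases h : ∃ k, ¬ p k
  · refine ⟨Nat.find h, fun i hi => ?_, fun k hk => ?_⟩
    · exact not_not.mp (Nat.find_min h (by exact_mod_cast hi))
    · obtain rfl : Nat.find h = k := by exact_mod_cast hk
      exact Nat.find_spec h
  · push Not at h
    exact ⟨⊤, fun i _ => h i, fun k hk => absurd hk.symm (ENat.natCast_ne_top k)⟩

theorem exists_isAugmentingPath_alternatingWalk {G : SimpleGraph V} {M N : Set (Sym2 V)}
    (hM : IsMatching G M) (hMsupp : supp M = Set.univ) (hN : IsMatching G N) {s : V}
    (hs : s ∉ supp N) (h1 : alternatingWalk M N s 1 ∈ supp N) :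
    ∃ n, IsAugmentingPath G N n (alternatingWalk M N s) s ∧
      IsProper N n (alternatingWalk M N s) := by
  set f := alternatingWalk M N s
  -- `f n` is the first vertex at which the walk cannot continue; the path is `f 0, …, f n`
  obtain ⟨n, hlive, hstop⟩ :=
    exists_enat_forall_lt_and_not (fun i => f i ∈ supp (alternate M N i))
  have h2n : (2 : ℕ∞) ≤ n := by
    cases n using ENat.recTopCoe with
    | top => exact le_top
    | coe m =>
      have hm0 : m ≠ 0 := by
        rintro rfl; exact hstop 0 rfl (by rw [alternate_of_even Even.zero, hMsupp]; trivial)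
      have hm1 : m ≠ 1 := by rintro rfl; exact hstop 1 rfl (by rwa [alternate_of_odd odd_one])
      exact_mod_cast (by omega : 2 ≤ m)
  have hedges : ∀ i : ℕ, (i : ℕ∞) + 1 < n + 1 → s(f i, f (i + 1)) ∈ alternate M N i :=
    fun i hi => mk_partner_mem (hlive i ((ENat.add_lt_add_iff_right ENat.one_ne_top).mp hi))
  have hend : ∀ k : ℕ, n + 1 = k + 1 → f k ∉ supp N := by
    intro k hk
    have hk' := hstop k (WithTop.add_right_cancel ENat.one_ne_top hk)
    rcases alternate_eq_or (M := M) (N := N) k with h | h <;> rw [h] at hk'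
    · exact absurd (hMsupp ▸ trivial) hk'
    · exact hk'
  have h12 : ((1 : ℕ) : ℕ∞) + 1 < n + 1 :=
    (ENat.add_lt_add_iff_right ENat.one_ne_top).mpr (lt_of_lt_of_le (by norm_num) h2n)
  refine ⟨n + 1, isAugmentingPath_of_alternate hM hN (lt_trans (by norm_num) h12) hs
    hedges hend, 1, h12, ?_⟩
  simpa [alternate_of_odd odd_one] using hedges 1 h12

theorem no_perfect_matching_edge_into_indepSubgraph_general {V : Type*}
    (G : SimpleGraph V) (M : Set (Sym2 V)) (hM : IsPerfectMatching G M)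
    (W : Set V) (hW : IndepSubgraph G W) :
    ∀ s v : V, s(s, v) ∈ M → s ∉ W → v ∉ W := by
  intro s v hsv hsW hvW
  obtain ⟨⟨N, hN, rfl⟩, hindep⟩ := hW
  obtain ⟨hM, hMsupp⟩ := hM
  have hf1 : alternatingWalk M N s 1 = v :=
    hM.eq_of_mem_of_mem (mk_partner_mem (hMsupp ▸ trivial)) hsv
  obtain ⟨n, haug, hproper⟩ :=
    exists_isAugmentingPath_alternatingWalk hM hMsupp hN hsW (hf1 ▸ hvW)
  exact (hindep N hN rfl).2 ⟨s, n, _, haug, hproper⟩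

/-- A perfect matching has no edge from the complement of an
independent subgraph `W` into `W`. -/
theorem no_perfect_matching_edge_into_indepSubgraph {V : Type*} [Countable V]
    (G : SimpleGraph V) (M : Set (Sym2 V)) (hM : IsPerfectMatching G M)
    (W : Set V) (hW : IndepSubgraph G W) :
    ∀ s v : V, s(s, v) ∈ M → s ∉ W → v ∉ W :=
  no_perfect_matching_edge_into_indepSubgraph_general G M hM W hW

end PaperMatchings
end

section
/- Let G be a simple graph and let M be a matching of G of maximal support, i.e., V(M) is not properly contained in the support of any other matching of G. Then M is an independent matching of G. -/
namespace PaperMatchings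

variable {V : Type*}

/-
Augmenting along an augmenting path `P` from the unmatched vertex `s` replaces `M` by `M ∆ P`.
Since `s` is unmatched, the edges of `P` alternate starting outside `M`, so the `i`-th edge
of `P` lies in `M` exactly when `i` is odd. Every vertex of `P` lies on an even edge, and every
matched vertex of `P` is matched along `P` (the last vertex of a finite `P` is unmatched).
Hence `M ∆ P` is again a matching, it covers every vertex covered by `M`, and it also covers `s`,
contradicting the maximality of the support of `M`.
-/

open scoped symmDiff

def pathEdges (n : ℕ∞) (f : ℕ → V) : Set (Sym2 V) :=
  {e | ∃ i : ℕ, (i : ℕ∞) + 1 < n ∧ e = s(f i, f (i + 1))}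

section AugmentingPath

variable {G : SimpleGraph V} {M : Set (Sym2 V)} {n : ℕ∞} {f : ℕ → V} {s : V}

lemma IsAlternating.edge_mem_iff_odd (halt : IsAlternating M n f) (h0 : f 0 ∉ supp M) :
    ∀ i : ℕ, (i : ℕ∞) + 1 < n → (s(f i, f (i + 1)) ∈ M ↔ Odd i)
  | 0, _ => by simpa using fun h => h0 ⟨_, h, Sym2.mem_mk_left _ _⟩
  | i + 1, hi => by
    have hi' : (i : ℕ∞) + 2 < n := by
      rwa [Nat.cast_succ, add_assoc, one_add_one_eq_two] at hi
    rw [Nat.odd_add_one, ← halt.edge_mem_iff_odd h0 i (by exact_mod_cast le_self_add.trans_lt hi)]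
    exact iff_not_comm.mp (halt i hi')

lemma IsPath.eq_of_even_of_mem_edge (hpath : IsPath G n f) {i j : ℕ} {v : V}
    (hi : (i : ℕ∞) + 1 < n) (hj : (j : ℕ∞) + 1 < n) (hi_even : Even i) (hj_even : Even j)
    (hvi : v ∈ s(f i, f (i + 1))) (hvj : v ∈ s(f j, f (j + 1))) : i = j := by
  have hinj {a b : ℕ} (ha : (a : ℕ∞) < n) (hb : (b : ℕ∞) < n) (h : f a = f b) : a = b :=
    hpath.2.1 a b ha hb h
  have hi₀ : (i : ℕ∞) < n := le_self_add.trans_lt hi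
  have hj₀ : (j : ℕ∞) < n := le_self_add.trans_lt hj
  have hi₁ : ((i + 1 : ℕ) : ℕ∞) < n := by exact_mod_cast hi
  have hj₁ : ((j + 1 : ℕ) : ℕ∞) < n := by exact_mod_cast hj
  rw [Nat.even_iff] at hi_even hj_even
  rw [Sym2.mem_iff] at hvi hvj
  rcases hvi with rfl | rfl <;> rcases hvj with h | h
  all_goals first
    | exact hinj hi₀ hj₀ h
    | have := hinj hi₀ hj₁ h; omega
    | have := hinj hi₁ hj₀ h; omega
    | have := hinj hi₁ hj₁ h; omega

lemma exists_index_of_mem_pathEdges {e : Sym2 V} {v : V} (he : e ∈ pathEdges n f) (hv : v ∈ e) :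
    ∃ k : ℕ, (k : ℕ∞) < n ∧ f k = v := by
  obtain ⟨i, hi, rfl⟩ := he
  rcases Sym2.mem_iff.mp hv with rfl | rfl
  · exact ⟨i, le_self_add.trans_lt hi, rfl⟩
  · exact ⟨i + 1, by exact_mod_cast hi, rfl⟩

namespace IsAugmentingPath

variable (hP : IsAugmentingPath G M n f s)
include hP

lemma edge_mem_iff_odd {i : ℕ} (hi : (i : ℕ∞) + 1 < n) : s(f i, f (i + 1)) ∈ M ↔ Odd i :=
  hP.2.1.edge_mem_iff_odd (hP.2.2.2.1 ▸ hP.2.2.2.2.1) i hi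

lemma succ_lt_of_mem_supp {k : ℕ} (hk : (k : ℕ∞) < n) (hmem : f k ∈ supp M) :
    (k : ℕ∞) + 1 < n :=
  (Order.add_one_le_of_lt hk).lt_of_ne fun hlast => hP.2.2.2.2.2 k hlast.symm hmem

lemma exists_even_edge {k : ℕ} (hk : (k : ℕ∞) < n) :
    ∃ i : ℕ, (i : ℕ∞) + 1 < n ∧ Even i ∧ f k ∈ s(f i, f (i + 1)) := by
  obtain _ | j := k
  · exact ⟨0, by simpa using hP.2.2.1, Even.zero, Sym2.mem_mk_left _ _⟩
  have hj : (j : ℕ∞) + 1 < n := by exact_mod_cast hk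
  rcases Nat.even_or_odd j with hj_even | hj_odd
  · exact ⟨j, hj, hj_even, Sym2.mem_mk_right _ _⟩
  · -- the edge entering `f (j + 1)` is in `M`, so `f (j + 1)` is not the last vertex
    have hmem : f (j + 1) ∈ supp M :=
      ⟨_, (hP.edge_mem_iff_odd hj).mpr hj_odd, Sym2.mem_mk_right _ _⟩
    exact ⟨j + 1, hP.succ_lt_of_mem_supp hk hmem, hj_odd.add_one, Sym2.mem_mk_left _ _⟩

lemma exists_odd_edge_of_mem_supp {k : ℕ} (hk : (k : ℕ∞) < n) (hmem : f k ∈ supp M) :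
    ∃ i : ℕ, (i : ℕ∞) + 1 < n ∧ Odd i ∧ f k ∈ s(f i, f (i + 1)) := by
  obtain _ | j := k
  · exact absurd (hP.2.2.2.1 ▸ hmem) hP.2.2.2.2.1
  rcases Nat.even_or_odd j with hj_even | hj_odd
  · exact ⟨j + 1, hP.succ_lt_of_mem_supp hk hmem, hj_even.add_one, Sym2.mem_mk_left _ _⟩
  · exact ⟨j, by exact_mod_cast hk, hj_odd, Sym2.mem_mk_right _ _⟩

lemma mem_pathEdges_of_mem (hM : IsMatching G M) {k : ℕ} (hk : (k : ℕ∞) < n)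
    {e : Sym2 V} (he : e ∈ M) (hv : f k ∈ e) : e ∈ pathEdges n f := by
  obtain ⟨i, hi, hi_odd, hvi⟩ := hP.exists_odd_edge_of_mem_supp hk ⟨e, he, hv⟩
  exact ⟨i, hi, hM.2 (f k) e he _ ((hP.edge_mem_iff_odd hi).mpr hi_odd) hv hvi⟩

lemma mem_supp_symmDiff {k : ℕ} (hk : (k : ℕ∞) < n) : f k ∈ supp (M ∆ pathEdges n f) := by
  obtain ⟨i, hi, hi_even, hvi⟩ := hP.exists_even_edge hk
  have hi_not_mem : s(f i, f (i + 1)) ∉ M := fun h =>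
    Nat.not_odd_iff_even.mpr hi_even ((hP.edge_mem_iff_odd hi).mp h)
  exact ⟨_, Set.mem_symmDiff.mpr (Or.inr ⟨⟨i, hi, rfl⟩, hi_not_mem⟩), hvi⟩

lemma supp_subset_supp_symmDiff : supp M ⊆ supp (M ∆ pathEdges n f) := by
  rintro v ⟨e, he, hv⟩
  by_cases he_P : e ∈ pathEdges n f
  · obtain ⟨k, hk, rfl⟩ := exists_index_of_mem_pathEdges he_P hv
    exact hP.mem_supp_symmDiff hk
  · exact ⟨e, Set.mem_symmDiff.mpr (Or.inl ⟨he, he_P⟩), hv⟩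

lemma isMatching_symmDiff (hM : IsMatching G M) : IsMatching G (M ∆ pathEdges n f) := by
  have hpath_match {v : V} {e e' : Sym2 V} (he : e ∈ pathEdges n f) (he_M : e ∉ M)
      (he' : e' ∈ pathEdges n f) (he'_M : e' ∉ M) (hv : v ∈ e) (hv' : v ∈ e') : e = e' := by
    obtain ⟨i, hi, rfl⟩ := he
    obtain ⟨j, hj, rfl⟩ := he'
    have hi_even := Nat.not_odd_iff_even.mp (mt (hP.edge_mem_iff_odd hi).mpr he_M)
    have hj_even := Nat.not_odd_iff_even.mp (mt (hP.edge_mem_iff_odd hj).mpr he'_M)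
    rw [hP.1.eq_of_even_of_mem_edge hi hj hi_even hj_even hv hv']
  have hmixed {v : V} {e e' : Sym2 V} (he : e ∈ M) (he_P : e ∉ pathEdges n f)
      (he' : e' ∈ pathEdges n f) (hv : v ∈ e) (hv' : v ∈ e') : False := by
    obtain ⟨k, hk, rfl⟩ := exists_index_of_mem_pathEdges he' hv'
    exact he_P (hP.mem_pathEdges_of_mem hM hk he hv)
  refine ⟨fun e he => ?_, fun v e he e' he' hv hv' => ?_⟩
  · rcases Set.mem_symmDiff.mp he with ⟨he, -⟩ | ⟨⟨i, hi, rfl⟩, -⟩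
    · exact hM.1 he
    · exact hP.1.2.2 i hi
  · rcases Set.mem_symmDiff.mp he with ⟨he, he_P⟩ | ⟨he_P, he_M⟩ <;>
      rcases Set.mem_symmDiff.mp he' with ⟨he', he'_P⟩ | ⟨he'_P, he'_M⟩
    · exact hM.2 v e he e' he' hv hv'
    · exact (hmixed he he_P he'_P hv hv').elim
    · exact (hmixed he' he'_P he_P hv' hv).elim
    · exact hpath_match he_P he_M he'_P he'_M hv hv'

end IsAugmentingPath

end AugmentingPath

/-- A matching of maximal support is independent. -/
theorem maximal_matching_is_indep {V : Type*} (G : SimpleGraph V)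
    (M : Set (Sym2 V)) (hM : IsMatching G M)
    (hmax : ∀ M' : Set (Sym2 V), IsMatching G M' → ¬ supp M ⊂ supp M') :
    IndepMatching G M := by
  refine ⟨hM, fun ⟨s, n, f, hP, _⟩ => hmax _ (hP.isMatching_symmDiff hM) ?_⟩
  refine (Set.ssubset_iff_of_subset hP.supp_subset_supp_symmDiff).mpr ⟨s, ?_, hP.2.2.2.2.1⟩
  have h0 : ((0 : ℕ) : ℕ∞) < n := by exact_mod_cast zero_lt_one.trans hP.2.2.1
  exact hP.2.2.2.1 ▸ hP.mem_supp_symmDiff h0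

end PaperMatchings
end
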